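/- arXiv:0802.2378 — 2 statements merged into one kernel-verified Lean document; each statement's English description precedes it below -/
import Mathlib

section
/- For every ε > 0 there exists a constant C = C(ε) > 0 such that for all integers q > N ≥ 1 with q ≥ 2 one has M₂(q,N) ≤ C·N²·q^ε, where M₂(q,N) = φ(q)·∑_{m,n=1}^{N} ∑_{u,v=1, mu ≡ nv (mod q), mu ≠ nv}^{q²} 1/(uv). -/
/-!
Split `mu ≠ nv` into `mu < nv` and its mirror image, which contribute equally. For fixed `m, u`,
each pair `(n, v)` with `nv ≡ mu (mod q)` and `nv > mu` has `nv = mu + kq` with `1 ≤ k ≤ Nq²`;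
for each `k` there are at most `d(mu + kq)` such pairs, and each has `1/v = n/(nv) ≤ N/(kq)`.
So the inner sum is at most `D·(N/q)·H(Nq²)`, where `D` bounds the divisor function up to `q⁵`
and `H` is the harmonic sum, and summing over `m, u` costs a further `N·H(q²)`. With `φ(q) ≤ q`
this gives `M₂(q, N) ≤ 2 D N² H(q²) H(Nq²)`, and both `d(b) ≪_δ b^δ` and `H(x) ≤ 1 + log x`
are `O(q^δ)` for every `δ > 0`.
-/

open scoped BigOperators

/-- `M₂(q,N) = φ(q) ∑_{m,n=1}^N ∑_{u,v=1, mu ≡ nv (mod q), mu ≠ nv}^{q²} 1/(uv)`. -/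
noncomputable def M2 (q N : ℕ) : ℝ :=
  (Nat.totient q : ℝ) *
    ∑ m ∈ Finset.Icc 1 N, ∑ n ∈ Finset.Icc 1 N,
      ∑ u ∈ Finset.Icc 1 (q ^ 2), ∑ v ∈ Finset.Icc 1 (q ^ 2),
        if m * u ≡ n * v [MOD q] ∧ m * u ≠ n * v then 1 / ((u : ℝ) * (v : ℝ)) else 0

open Finset Real

lemma add_one_le_one_add_inv_log_mul_pow {x : ℝ} (hx : 1 < x) (e : ℕ) :
    (e + 1 : ℝ) ≤ (1 + (log x)⁻¹) * x ^ e := by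
  have hL : 0 < log x := log_pos hx
  have hpow : 1 + e * log x ≤ x ^ e := by
    calc 1 + e * log x ≤ exp (e * log x) := by linarith [add_one_le_exp (e * log x)]
      _ = x ^ e := by rw [exp_nat_mul, exp_log (by linarith)]
  have hcancel : (log x)⁻¹ * log x = 1 := inv_mul_cancel₀ hL.ne'
  calc (e + 1 : ℝ) ≤ (1 + (log x)⁻¹) * (1 + e * log x) := by
        nlinarith [inv_pos.mpr hL, (Nat.cast_nonneg e : (0 : ℝ) ≤ e)]
    _ ≤ (1 + (log x)⁻¹) * x ^ e := by gcongr

lemma harmonic_le_one_add_inv_mul_rpow {ε : ℝ} (hε : 0 < ε) (n : ℕ) :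
    (harmonic n : ℝ) ≤ (1 + ε⁻¹) * (n : ℝ) ^ ε := by
  rcases n.eq_zero_or_pos with rfl | hn
  · simp [zero_rpow hε.ne']
  have hn1 : (1 : ℝ) ≤ n := by exact_mod_cast hn
  have hlog : log n ≤ (n : ℝ) ^ ε / ε := log_le_rpow_div (by positivity) hε
  have hone : 1 ≤ (n : ℝ) ^ ε := one_le_rpow hn1 hε.le
  calc (harmonic n : ℝ) ≤ 1 + log n := harmonic_le_one_add_log n
    _ ≤ (1 + ε⁻¹) * (n : ℝ) ^ ε := by rw [div_eq_inv_mul] at hlog; nlinarith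

-- Only the primes `p < 2 ^ (1/δ)` can have `e + 1 > p ^ (eδ)`, and for those `p ^ δ ≥ 2 ^ δ > 1`.
lemma add_one_le_ite_mul_rpow_pow {δ : ℝ} (hδ : 0 < δ) {p : ℕ} (hp : 2 ≤ p) (e : ℕ) :
    (e + 1 : ℝ) ≤
      (if p < ⌈(2 : ℝ) ^ δ⁻¹⌉₊ then 1 + (log (2 ^ δ))⁻¹ else 1) * ((p : ℝ) ^ δ) ^ e := by
  have htwo : (2 : ℝ) ^ δ ≤ (p : ℝ) ^ δ := by gcongr; exact_mod_cast hp
  split_ifs with hsmall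
  · calc (e + 1 : ℝ) ≤ (1 + (log (2 ^ δ))⁻¹) * ((2 : ℝ) ^ δ) ^ e :=
          add_one_le_one_add_inv_log_mul_pow (one_lt_rpow (by norm_num) hδ) e
      _ ≤ (1 + (log (2 ^ δ))⁻¹) * ((p : ℝ) ^ δ) ^ e := by
          have : 0 ≤ log ((2 : ℝ) ^ δ) := log_nonneg (one_le_rpow (by norm_num) hδ.le)
          gcongr
  · have hlarge : (2 : ℝ) ^ δ⁻¹ ≤ p := Nat.ceil_le.mp (not_lt.mp hsmall)
    have h2 : (2 : ℝ) ≤ (p : ℝ) ^ δ := by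
      calc (2 : ℝ) = ((2 : ℝ) ^ δ⁻¹) ^ δ := (rpow_inv_rpow (by norm_num) hδ.ne').symm
        _ ≤ (p : ℝ) ^ δ := by gcongr
    calc (e + 1 : ℝ) ≤ 2 ^ e := by exact_mod_cast Nat.lt_two_pow_self
      _ ≤ ((p : ℝ) ^ δ) ^ e := by gcongr
      _ = 1 * ((p : ℝ) ^ δ) ^ e := (one_mul _).symm

theorem Nat.exists_card_divisors_le_mul_rpow {δ : ℝ} (hδ : 0 < δ) :
    ∃ C : ℝ, 0 < C ∧ ∀ n : ℕ, n ≠ 0 → (#n.divisors : ℝ) ≤ C * (n : ℝ) ^ δ := by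
  set B := ⌈(2 : ℝ) ^ δ⁻¹⌉₊
  set c : ℝ := 1 + (Real.log (2 ^ δ))⁻¹
  have hc : 1 ≤ c :=
    le_add_of_nonneg_right (inv_nonneg.mpr (Real.log_nonneg (one_le_rpow (by norm_num) hδ.le)))
  refine ⟨c ^ B, by positivity, fun n hn => ?_⟩
  have hfactor : ∏ p ∈ n.primeFactors, ((p : ℝ) ^ δ) ^ n.factorization p = (n : ℝ) ^ δ := by
    rw [prod_congr rfl fun p _ => rpow_pow_comm p.cast_nonneg δ _,
      finsetProd_rpow _ _ fun p _ => by positivity]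
    congr 1
    exact_mod_cast (Nat.prod_primeFactors_pow_factorization hn).symm
  have hsmall : ∏ p ∈ n.primeFactors, (if p < B then c else 1) ≤ c ^ B := by
    rw [← prod_filter, prod_const]
    refine pow_le_pow_right₀ hc ?_
    simpa using card_le_card (fun p hp => mem_range.mpr (mem_filter.mp hp).2 :
      n.primeFactors.filter (· < B) ⊆ range B)
  calc (#n.divisors : ℝ) = ∏ p ∈ n.primeFactors, ((n.factorization p : ℝ) + 1) := by
        rw [Nat.card_divisors hn]; push_cast; rfl
    _ ≤ ∏ p ∈ n.primeFactors, ((if p < B then c else 1) * ((p : ℝ) ^ δ) ^ n.factorization p) :=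
        prod_le_prod (fun _ _ => by positivity) fun p hp =>
          add_one_le_ite_mul_rpow_pow hδ (Nat.prime_of_mem_primeFactors hp).two_le _
    _ = (∏ p ∈ n.primeFactors, (if p < B then c else 1)) * (n : ℝ) ^ δ := by
        rw [prod_mul_distrib, hfactor]
    _ ≤ c ^ B * (n : ℝ) ^ δ := by gcongr

lemma sum_inv_of_mul_eq_le (N V b : ℕ) :
    ∑ n ∈ Icc 1 N, ∑ v ∈ Icc 1 V, (if n * v = b then (v : ℝ)⁻¹ else 0)
      ≤ #b.divisors * N / b := by
  rcases b.eq_zero_or_pos with rfl | hb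
  · refine (sum_eq_zero fun n hn => sum_eq_zero fun v hv => if_neg ?_).le.trans (by simp)
    simp only [mem_Icc] at hn hv
    exact (Nat.mul_pos hn.1 hv.1).ne'
  rw [← sum_product', ← sum_filter]
  set P := (Icc 1 N ×ˢ Icc 1 V).filter fun p => p.1 * p.2 = b
  have hP : P ⊆ b.divisorsAntidiagonal := fun p hp => by
    simp only [P, mem_filter] at hp
    exact Nat.mem_divisorsAntidiagonal.mpr ⟨hp.2, hb.ne'⟩
  have hterm : ∀ p ∈ P, (p.2 : ℝ)⁻¹ ≤ N / b := fun p hp => by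
    simp only [P, mem_filter, mem_product, mem_Icc] at hp
    obtain ⟨⟨⟨hn1, hn⟩, hv, -⟩, hmul⟩ := hp
    have hn0 : (0 : ℝ) < p.1 := by exact_mod_cast hn1
    have hv0 : (0 : ℝ) < p.2 := by exact_mod_cast hv
    rw [← hmul, Nat.cast_mul, inv_eq_one_div, div_le_div_iff₀ hv0 (by positivity)]
    have : (p.1 : ℝ) ≤ N := by exact_mod_cast hn
    nlinarith
  have hcard : #P ≤ #b.divisors := by
    rw [← Nat.map_div_right_divisors] at hP
    exact (card_le_card hP).trans_eq (card_map _)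
  calc ∑ p ∈ P, (p.2 : ℝ)⁻¹ ≤ #P • ((N : ℝ) / b) := sum_le_card_nsmul P _ _ hterm
    _ ≤ #b.divisors * N / b := by
        rw [nsmul_eq_mul, mul_div_assoc]
        gcongr

lemma sum_inv_of_modEq_of_lt_le {q : ℕ} (hq : 0 < q) (a N V : ℕ) {D : ℝ}
    (hD : ∀ k ∈ Icc 1 (N * V), (#(a + k * q).divisors : ℝ) ≤ D) :
    ∑ n ∈ Icc 1 N, ∑ v ∈ Icc 1 V, (if a ≡ n * v [MOD q] ∧ a < n * v then (v : ℝ)⁻¹ else 0)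
      ≤ D * N / q * harmonic (N * V) := by
  have hcover : ∀ n ∈ Icc 1 N, ∀ v ∈ Icc 1 V,
      (if a ≡ n * v [MOD q] ∧ a < n * v then (v : ℝ)⁻¹ else 0)
        ≤ ∑ k ∈ Icc 1 (N * V), (if n * v = a + k * q then (v : ℝ)⁻¹ else 0) := by
    intro n hn v hv
    have hnonneg : ∀ k ∈ Icc 1 (N * V), 0 ≤ (if n * v = a + k * q then (v : ℝ)⁻¹ else 0) :=
      fun k _ => by positivity
    split_ifs with h
    · obtain ⟨hmod, hlt⟩ := h
      have hdvd : q ∣ n * v - a := (Nat.modEq_iff_dvd' hlt.le).mp hmod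
      have hk : n * v = a + (n * v - a) / q * q := by rw [Nat.div_mul_cancel hdvd]; omega
      have hkmem : (n * v - a) / q ∈ Icc 1 (N * V) := by
        simp only [mem_Icc] at hn hv ⊢
        refine ⟨(Nat.one_le_div_iff hq).mpr (Nat.le_of_dvd (by omega) hdvd), ?_⟩
        calc (n * v - a) / q ≤ n * v - a := Nat.div_le_self _ _
          _ ≤ N * V := by have := Nat.mul_le_mul hn.2 hv.2; omega
      exact (if_pos hk).symm.trans_le (single_le_sum hnonneg hkmem)
    · exact sum_nonneg hnonneg
  calc _ ≤ ∑ n ∈ Icc 1 N, ∑ v ∈ Icc 1 V, ∑ k ∈ Icc 1 (N * V),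
          (if n * v = a + k * q then (v : ℝ)⁻¹ else 0) :=
        sum_le_sum fun n hn => sum_le_sum fun v hv => hcover n hn v hv
    _ = ∑ k ∈ Icc 1 (N * V), ∑ n ∈ Icc 1 N, ∑ v ∈ Icc 1 V,
          (if n * v = a + k * q then (v : ℝ)⁻¹ else 0) :=
        (sum_congr rfl fun n _ => sum_comm).trans sum_comm
    _ ≤ ∑ k ∈ Icc 1 (N * V), (#(a + k * q).divisors : ℝ) * N / (a + k * q : ℕ) :=
        sum_le_sum fun k _ => sum_inv_of_mul_eq_le N V _
    _ ≤ ∑ k ∈ Icc 1 (N * V), D * N / (k * q) := by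
        refine sum_le_sum fun k hk => ?_
        have hD0 : 0 ≤ D := (Nat.cast_nonneg _).trans (hD k hk)
        have hk1 : (1 : ℝ) ≤ k := by exact_mod_cast (mem_Icc.mp hk).1
        push_cast
        gcongr
        · exact hD k hk
        · linarith
    _ = D * N / q * harmonic (N * V) := by
        rw [harmonic_eq_sum_Icc]
        push_cast
        rw [mul_sum]
        refine sum_congr rfl fun k _ => ?_
        field_simp

lemma sum_ite_modEq_ne_eq_two_mul (q : ℕ) (A B : Finset ℕ) :
    ∑ m ∈ A, ∑ n ∈ A, ∑ u ∈ B, ∑ v ∈ B,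
        (if m * u ≡ n * v [MOD q] ∧ m * u ≠ n * v then 1 / ((u : ℝ) * v) else 0)
      = 2 * ∑ m ∈ A, ∑ n ∈ A, ∑ u ∈ B, ∑ v ∈ B,
        (if m * u ≡ n * v [MOD q] ∧ m * u < n * v then (u : ℝ)⁻¹ * (v : ℝ)⁻¹ else 0) := by
  have hsplit : ∀ m n u v : ℕ,
      (if m * u ≡ n * v [MOD q] ∧ m * u ≠ n * v then 1 / ((u : ℝ) * v) else 0)
        = (if m * u ≡ n * v [MOD q] ∧ m * u < n * v then (u : ℝ)⁻¹ * (v : ℝ)⁻¹ else 0)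
          + (if n * v ≡ m * u [MOD q] ∧ n * v < m * u then (v : ℝ)⁻¹ * (u : ℝ)⁻¹ else 0) := by
    intro m n u v
    rw [one_div, mul_inv]
    simp only [Nat.ModEq.comm (a := n * v)]
    rcases lt_trichotomy (m * u) (n * v) with h | h | h
    · simp [h, h.ne, not_lt_of_gt h]
    · simp [h]
    · simp [h, h.ne', not_lt_of_gt h, mul_comm]
  simp only [hsplit, sum_add_distrib, two_mul]
  congr 1
  rw [sum_comm]
  exact sum_congr rfl fun n _ => sum_congr rfl fun m _ => sum_comm

lemma M2_le_two_mul_harmonic {q : ℕ} (hq : 0 < q) (N : ℕ) {D : ℝ}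
    (hD : ∀ b ≤ N * q ^ 2 * (q + 1), (#b.divisors : ℝ) ≤ D) :
    M2 q N ≤ 2 * D * N ^ 2 * harmonic (q ^ 2) * harmonic (N * q ^ 2) := by
  set T := ∑ m ∈ Icc 1 N, ∑ n ∈ Icc 1 N, ∑ u ∈ Icc 1 (q ^ 2), ∑ v ∈ Icc 1 (q ^ 2),
    (if m * u ≡ n * v [MOD q] ∧ m * u < n * v then (u : ℝ)⁻¹ * (v : ℝ)⁻¹ else 0)
  set c := D * N / q * harmonic (N * q ^ 2)
  have hinner : ∀ m ∈ Icc 1 N, ∀ u ∈ Icc 1 (q ^ 2), ∑ n ∈ Icc 1 N, ∑ v ∈ Icc 1 (q ^ 2),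
      (if m * u ≡ n * v [MOD q] ∧ m * u < n * v then (v : ℝ)⁻¹ else 0) ≤ c := by
    intro m hm u hu
    refine sum_inv_of_modEq_of_lt_le hq (m * u) N (q ^ 2) fun k hk => hD _ ?_
    simp only [mem_Icc] at hm hu hk
    calc m * u + k * q ≤ N * q ^ 2 + N * q ^ 2 * q :=
          add_le_add (Nat.mul_le_mul hm.2 hu.2) (Nat.mul_le_mul_right q hk.2)
      _ = N * q ^ 2 * (q + 1) := by ring
  have hT : T ≤ N * harmonic (q ^ 2) * c := by
    calc T = ∑ m ∈ Icc 1 N, ∑ u ∈ Icc 1 (q ^ 2), (u : ℝ)⁻¹ * ∑ n ∈ Icc 1 N, ∑ v ∈ Icc 1 (q ^ 2),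
          (if m * u ≡ n * v [MOD q] ∧ m * u < n * v then (v : ℝ)⁻¹ else 0) := by
          refine sum_congr rfl fun m _ => ?_
          rw [sum_comm]
          simp only [mul_sum, mul_ite, mul_zero]
      _ ≤ ∑ m ∈ Icc 1 N, ∑ u ∈ Icc 1 (q ^ 2), (u : ℝ)⁻¹ * c :=
          sum_le_sum fun m hm => sum_le_sum fun u hu =>
            mul_le_mul_of_nonneg_left (hinner m hm u hu) (by positivity)
      _ = N * harmonic (q ^ 2) * c := by
          rw [harmonic_eq_sum_Icc, ← sum_mul]
          simp [mul_assoc]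
  have hT0 : 0 ≤ T := sum_nonneg fun _ _ => sum_nonneg fun _ _ => sum_nonneg fun _ _ =>
    sum_nonneg fun _ _ => by positivity
  have hM2 : M2 q N = Nat.totient q * (2 * T) := by rw [M2, sum_ite_modEq_ne_eq_two_mul]
  clear_value T
  calc M2 q N = Nat.totient q * (2 * T) := hM2
    _ ≤ q * (2 * (N * harmonic (q ^ 2) * c)) :=
        mul_le_mul (by exact_mod_cast Nat.totient_le q) (by linarith) (by positivity)
          (by positivity)
    _ = 2 * D * N ^ 2 * harmonic (q ^ 2) * harmonic (N * q ^ 2) := by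
        simp only [c]
        field_simp

lemma mul_sq_mul_succ_le_pow_five {q N : ℕ} (hq : 2 ≤ q) (hNq : N ≤ q) :
    N * q ^ 2 * (q + 1) ≤ q ^ 5 :=
  calc N * q ^ 2 * (q + 1) ≤ q * q ^ 2 * (q + 1) := by gcongr
    _ = q ^ 4 + q ^ 3 := by ring
    _ ≤ q ^ 4 + q ^ 4 := by gcongr <;> omega
    _ = 2 * q ^ 4 := by ring
    _ ≤ q * q ^ 4 := by gcongr
    _ = q ^ 5 := by ring

lemma M2_le_of_card_divisors_le_mul_rpow {δ C : ℝ} (hδ : 0 < δ) (hC : 0 < C)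
    (hdiv : ∀ n : ℕ, n ≠ 0 → (#n.divisors : ℝ) ≤ C * (n : ℝ) ^ δ)
    {q N : ℕ} (hq : 2 ≤ q) (hN : 1 ≤ N) (hNq : N ≤ q) :
    M2 q N ≤ 2 * C * (1 + δ⁻¹) ^ 2 * N ^ 2 * (q : ℝ) ^ (15 * δ) := by
  set Q : ℝ := ((q ^ 5 : ℕ) : ℝ) ^ δ
  have hX := mul_sq_mul_succ_le_pow_five hq hNq
  have hmono : ∀ b ≤ q ^ 5, (b : ℝ) ^ δ ≤ Q := fun b hb =>
    rpow_le_rpow (Nat.cast_nonneg _) (by exact_mod_cast hb) hδ.le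
  have hD : ∀ b ≤ N * q ^ 2 * (q + 1), (#b.divisors : ℝ) ≤ C * Q := by
    intro b hb
    rcases eq_or_ne b 0 with rfl | hb0
    · simp only [Nat.divisors_zero, card_empty, Nat.cast_zero]
      positivity
    · exact (hdiv b hb0).trans (by gcongr; exact hmono b (hb.trans hX))
  have hH : ∀ M ≤ q ^ 5, (harmonic M : ℝ) ≤ (1 + δ⁻¹) * Q := fun M hM =>
    (harmonic_le_one_add_inv_mul_rpow hδ M).trans (by gcongr; exact hmono M hM)
  have hQ : Q ^ 3 = (q : ℝ) ^ (15 * δ) := by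
    rw [← rpow_natCast, ← rpow_mul (by positivity), Nat.cast_pow, ← rpow_natCast,
      ← rpow_mul (by positivity)]
    congr 1
    push_cast
    ring
  calc M2 q N ≤ 2 * (C * Q) * N ^ 2 * ((1 + δ⁻¹) * Q) * ((1 + δ⁻¹) * Q) := by
        refine (M2_le_two_mul_harmonic (by omega) N hD).trans ?_
        gcongr
        · exact_mod_cast (harmonic_pos (Nat.mul_pos hN (by positivity)).ne').le
        · exact hH _ (Nat.pow_le_pow_right (by omega) (by norm_num : 2 ≤ 5))
        · exact hH _ ((Nat.le_mul_of_pos_right (N * q ^ 2) q.succ_pos).trans hX)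
    _ = 2 * C * (1 + δ⁻¹) ^ 2 * N ^ 2 * (q : ℝ) ^ (15 * δ) := by rw [← hQ]; ring

/-- For every `ε > 0` there is `C = C(ε) > 0` such that for all integers `q > N ≥ 1`
with `q ≥ 2`, one has `M₂(q,N) ≤ C N² qᵉ`. -/
theorem M2_bound :
    ∀ ε : ℝ, 0 < ε → ∃ C : ℝ, 0 < C ∧ ∀ q N : ℕ, 2 ≤ q → 1 ≤ N → N < q →
      M2 q N ≤ C * (N : ℝ) ^ 2 * (q : ℝ) ^ ε := by
  intro ε hε
  obtain ⟨C, hC, hdiv⟩ := Nat.exists_card_divisors_le_mul_rpow (by positivity : 0 < ε / 15)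
  refine ⟨2 * C * (1 + (ε / 15)⁻¹) ^ 2, by positivity, fun q N hq hN hNq => ?_⟩
  have h := M2_le_of_card_divisors_le_mul_rpow (by positivity) hC hdiv hq hN hNq.le
  rwa [mul_div_cancel₀ ε (by norm_num : (15 : ℝ) ≠ 0)] at h
end

section
/- For every ε > 0 there exists a constant C = C(ε) > 0 such that for all integers q > N ≥ 1 with q ≥ 2 and all nonnegative integers i, j with i ≤ j ≤ ⌊2 log q⌋, the number T_{i,j}(q,N) of quadruples (m,n,u,v) of positive integers with 1 ≤ m,n ≤ N, e^i ≤ u < e^{i+1}, e^j ≤ v < e^{j+1}, mu ≡ nv (mod q) and mu ≠ nv satisfies T_{i,j}(q,N) ≤ C·e^{i+j}·N²·q^{−1+ε}. -/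
/-!
Write `mu - nv = qk`. As `i ≤ j`, both products lie in `[1, N e^{j+1})`, so `k ≠ 0` and
`|k| ≤ N e^{j+1} / q`: there are at most `2 e^{i+j+2} N² / q` triples `(m, u, k)`. A triple fixes
`nv = mu - qk ≤ 2 N e^{j+1} ≤ q⁶`, and then `n` is a divisor of this number and determines `v`.
The divisor bound `d(M) ≪_ε M^{ε/6}` thus bounds every fibre of `(m, n, u, v) ↦ (m, u, k)` by
`O_ε(q^ε)`.
-/

open scoped BigOperators

/-- `T_{i,j}(q,N)` is the number of quadruples `(m,n,u,v)` of positive integers with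
`1 ≤ m,n ≤ N`, `eⁱ ≤ u < e^{i+1}`, `eʲ ≤ v < e^{j+1}`, `mu ≡ nv (mod q)` and `mu ≠ nv`. -/
noncomputable def T (q N i j : ℕ) : ℕ :=
  Nat.card {x : ℕ × ℕ × ℕ × ℕ //
    1 ≤ x.1 ∧ x.1 ≤ N ∧ 1 ≤ x.2.1 ∧ x.2.1 ≤ N ∧
    Real.exp i ≤ (x.2.2.1 : ℝ) ∧ (x.2.2.1 : ℝ) < Real.exp (i + 1) ∧
    Real.exp j ≤ (x.2.2.2 : ℝ) ∧ (x.2.2.2 : ℝ) < Real.exp (j + 1) ∧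
    x.1 * x.2.2.1 ≡ x.2.1 * x.2.2.2 [MOD q] ∧ x.1 * x.2.2.1 ≠ x.2.1 * x.2.2.2}

open Finset Real

lemma add_one_le_pow_of_two_le {x : ℝ} (hx : 2 ≤ x) (a : ℕ) : (a : ℝ) + 1 ≤ x ^ a := by
  have := one_add_mul_le_pow (a := x - 1) (by linarith) a
  rw [add_sub_cancel] at this
  nlinarith

lemma add_one_le_mul_pow {x : ℝ} (hx : 1 < x) (a : ℕ) : (a : ℝ) + 1 ≤ x / (x - 1) * x ^ a := by
  have hbern := one_add_mul_le_pow (a := x - 1) (by linarith) a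
  rw [add_sub_cancel] at hbern
  have hx1 : 0 < x - 1 := sub_pos.mpr hx
  have hC : 1 ≤ x / (x - 1) := by rw [le_div_iff₀ hx1]; linarith
  calc (a : ℝ) + 1 ≤ x / (x - 1) + a * x := by nlinarith
    _ = x / (x - 1) * (1 + a * (x - 1)) := by field_simp
    _ ≤ x / (x - 1) * x ^ a := by gcongr

lemma Nat.rpow_eq_prod_primeFactors {n : ℕ} (hn : n ≠ 0) (s : ℝ) :
    (n : ℝ) ^ s = ∏ p ∈ n.primeFactors, ((p : ℝ) ^ s) ^ n.factorization p := by
  conv_lhs => rw [← Nat.prod_factorization_pow_eq_self hn]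
  rw [Finsupp.prod, Nat.cast_prod, ← Real.finsetProd_rpow _ _ (fun p _ => by positivity)]
  refine prod_congr rfl fun p _ => ?_
  rw [Nat.cast_pow, Real.rpow_pow_comm (Nat.cast_nonneg p)]

theorem Nat.card_divisors_le_mul_rpow {ε : ℝ} (hε : 0 < ε) :
    ∃ C : ℝ, 0 < C ∧ ∀ n : ℕ, (#n.divisors : ℝ) ≤ C * (n : ℝ) ^ ε := by
  set x : ℝ := 2 ^ ε
  have hx : 1 < x := Real.one_lt_rpow one_lt_two hε
  set C₀ : ℝ := x / (x - 1)
  have hC₀ : 1 ≤ C₀ := by rw [le_div_iff₀ (sub_pos.mpr hx)]; linarith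
  set B : ℕ := ⌈(2 : ℝ) ^ ε⁻¹⌉₊
  refine ⟨C₀ ^ B, by positivity, fun n => ?_⟩
  rcases eq_or_ne n 0 with rfl | hn
  · simp [Real.zero_rpow hε.ne']
  -- Primes `p ≥ 2^{1/ε}` satisfy `a + 1 ≤ p^{aε}`; each of the fewer than `B` others costs `C₀`.
  have hprime : ∀ p ∈ n.primeFactors, ((n.factorization p : ℝ) + 1) ≤
      (if p < B then C₀ else 1) * ((p : ℝ) ^ ε) ^ n.factorization p := by
    intro p hp
    have hp2 : (2 : ℝ) ≤ p := by exact_mod_cast (Nat.prime_of_mem_primeFactors hp).two_le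
    split_ifs with hpB
    · calc _ ≤ C₀ * x ^ n.factorization p := add_one_le_mul_pow hx _
        _ ≤ _ := by gcongr; exact Real.rpow_le_rpow zero_le_two hp2 hε.le
    · rw [one_mul]
      refine add_one_le_pow_of_two_le ?_ _
      calc (2 : ℝ) = ((2 : ℝ) ^ ε⁻¹) ^ ε := (Real.rpow_inv_rpow zero_le_two hε.ne').symm
        _ ≤ (B : ℝ) ^ ε := by gcongr; exact Nat.le_ceil _
        _ ≤ (p : ℝ) ^ ε := by gcongr; exact_mod_cast not_lt.mp hpB
  have hsmall : ∏ p ∈ n.primeFactors, (if p < B then C₀ else 1) ≤ C₀ ^ B := by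
    rw [prod_ite, prod_const, prod_const_one, mul_one]
    refine pow_le_pow_right₀ hC₀ ((card_le_card fun p hp => ?_).trans (card_range B).le)
    exact mem_range.mpr (mem_filter.mp hp).2
  calc (#n.divisors : ℝ) = ∏ p ∈ n.primeFactors, ((n.factorization p : ℝ) + 1) := by
        rw [Nat.card_divisors hn]; push_cast; rfl
    _ ≤ ∏ p ∈ n.primeFactors, (if p < B then C₀ else 1) * ((p : ℝ) ^ ε) ^ n.factorization p :=
        prod_le_prod (fun _ _ => by positivity) hprime
    _ ≤ C₀ ^ B * (n : ℝ) ^ ε := by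
        rw [prod_mul_distrib, Nat.rpow_eq_prod_primeFactors hn]
        gcongr

def offDiagonalSolutions (q N U V : ℕ) : Finset (ℕ × ℕ × ℕ × ℕ) :=
  {x ∈ Icc 1 N ×ˢ Icc 1 N ×ˢ Icc 1 U ×ˢ Icc 1 V |
    x.1 * x.2.2.1 ≡ x.2.1 * x.2.2.2 [MOD q] ∧ x.1 * x.2.2.1 ≠ x.2.1 * x.2.2.2}

section OffDiagonalSolutions

variable {q N U V : ℕ}

lemma mem_offDiagonalSolutions {m n u v : ℕ} :
    (m, n, u, v) ∈ offDiagonalSolutions q N U V ↔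
      (1 ≤ m ∧ m ≤ N) ∧ (1 ≤ n ∧ n ≤ N) ∧ (1 ≤ u ∧ u ≤ U) ∧ (1 ≤ v ∧ v ≤ V) ∧
        m * u ≡ n * v [MOD q] ∧ m * u ≠ n * v := by
  simp [offDiagonalSolutions, and_assoc]

def offDiagonalKey (q : ℕ) (x : ℕ × ℕ × ℕ × ℕ) : ℕ × ℕ × ℤ :=
  (x.1, x.2.2.1, ((x.1 : ℤ) * x.2.2.1 - x.2.1 * x.2.2.2) / q)

lemma mul_offDiagonalKey_eq {m n u v : ℕ} (h : (m, n, u, v) ∈ offDiagonalSolutions q N U V) :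
    (q : ℤ) * (offDiagonalKey q (m, n, u, v)).2.2 = m * u - n * v := by
  obtain ⟨-, -, -, -, hmod, -⟩ := mem_offDiagonalSolutions.mp h
  refine Int.mul_ediv_cancel' ?_
  exact_mod_cast Nat.modEq_iff_dvd.mp hmod.symm

lemma offDiagonalKey_ne_zero {m n u v : ℕ} (h : (m, n, u, v) ∈ offDiagonalSolutions q N U V) :
    (offDiagonalKey q (m, n, u, v)).2.2 ≠ 0 := by
  obtain ⟨-, -, -, -, -, hne⟩ := mem_offDiagonalSolutions.mp h
  intro h0
  have hq := mul_offDiagonalKey_eq h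
  rw [h0, mul_zero, eq_comm, sub_eq_zero] at hq
  exact hne (by exact_mod_cast hq)

lemma natAbs_offDiagonalKey_le (hUV : U ≤ V) {x : ℕ × ℕ × ℕ × ℕ}
    (hx : x ∈ offDiagonalSolutions q N U V) : (offDiagonalKey q x).2.2.natAbs ≤ N * V / q := by
  obtain ⟨m, n, u, v⟩ := x
  have hqk := mul_offDiagonalKey_eq hx
  have hk := offDiagonalKey_ne_zero hx
  obtain ⟨hm, hn, hu, hv, -⟩ := mem_offDiagonalSolutions.mp hx
  have hq : 0 < q := Nat.pos_of_ne_zero fun hq => hk (by simp [offDiagonalKey, hq])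
  have hmu : 1 ≤ m * u ∧ m * u ≤ N * V :=
    ⟨Nat.mul_le_mul hm.1 hu.1, Nat.mul_le_mul hm.2 (hu.2.trans hUV)⟩
  have hnv : 1 ≤ n * v ∧ n * v ≤ N * V :=
    ⟨Nat.mul_le_mul hn.1 hv.1, Nat.mul_le_mul hn.2 hv.2⟩
  have hdiff : ((m : ℤ) * u - n * v).natAbs ≤ N * V := by zify at hmu hnv; omega
  rw [← hqk, Int.natAbs_mul, Int.natAbs_natCast, mul_comm] at hdiff
  exact (Nat.le_div_iff_mul_le hq).mpr hdiff

lemma offDiagonalKey_mem (hUV : U ≤ V) {x : ℕ × ℕ × ℕ × ℕ}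
    (hx : x ∈ offDiagonalSolutions q N U V) :
    offDiagonalKey q x ∈
      Icc 1 N ×ˢ Icc 1 U ×ˢ (Icc (-(N * V / q : ℕ) : ℤ) (N * V / q : ℕ)).erase 0 := by
  obtain ⟨m, n, u, v⟩ := x
  obtain ⟨hm, -, hu, -⟩ := mem_offDiagonalSolutions.mp hx
  have hK := natAbs_offDiagonalKey_le hUV hx
  refine mem_product.mpr ⟨mem_Icc.mpr hm, mem_product.mpr ⟨mem_Icc.mpr hu,
    mem_erase.mpr ⟨offDiagonalKey_ne_zero hx, mem_Icc.mpr ?_⟩⟩⟩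
  omega

lemma toNat_offDiagonalKey {x : ℕ × ℕ × ℕ × ℕ} (hx : x ∈ offDiagonalSolutions q N U V) :
    (((offDiagonalKey q x).1 : ℤ) * (offDiagonalKey q x).2.1 - q * (offDiagonalKey q x).2.2).toNat =
      x.2.1 * x.2.2.2 := by
  obtain ⟨m, n, u, v⟩ := x
  rw [mul_offDiagonalKey_eq hx]
  dsimp only [offDiagonalKey]
  rw [sub_sub_cancel]
  exact_mod_cast Int.toNat_natCast (n * v)

lemma card_fiber_offDiagonalKey_le (b : ℕ × ℕ × ℤ) :
    #{x ∈ offDiagonalSolutions q N U V | offDiagonalKey q x = b} ≤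
      #(((b.1 : ℤ) * b.2.1 - q * b.2.2).toNat.divisors) := by
  refine card_le_card_of_injOn (fun x => x.2.1) (fun x hx => ?_) (fun x hx y hy hxy => ?_)
  · obtain ⟨hxS, rfl⟩ := mem_filter.mp hx
    obtain ⟨m, n, u, v⟩ := x
    obtain ⟨-, hn, -, hv, -⟩ := mem_offDiagonalSolutions.mp hxS
    rw [mem_coe, toNat_offDiagonalKey hxS, Nat.mem_divisors]
    exact ⟨dvd_mul_right n v,
      Nat.mul_ne_zero (Nat.one_le_iff_ne_zero.mp hn.1) (Nat.one_le_iff_ne_zero.mp hv.1)⟩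
  · obtain ⟨hxS, rfl⟩ := mem_filter.mp hx
    obtain ⟨hyS, hyx⟩ := mem_filter.mp hy
    have hnv := (toNat_offDiagonalKey hyS).symm.trans (hyx ▸ toNat_offDiagonalKey hxS)
    obtain ⟨m, n, u, v⟩ := x
    obtain ⟨m', n', u', v'⟩ := y
    obtain ⟨-, hn, -⟩ := mem_offDiagonalSolutions.mp hxS
    simp only [offDiagonalKey, Prod.mk.injEq] at hyx hxy hnv
    obtain ⟨rfl, rfl, -⟩ := hyx
    subst hxy
    rw [Nat.eq_of_mul_eq_mul_left hn.1 hnv]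

theorem card_offDiagonalSolutions_le {D : ℕ} (hUV : U ≤ V)
    (hD : ∀ M ≤ 2 * (N * V), #M.divisors ≤ D) :
    #(offDiagonalSolutions q N U V) ≤ D * (N * (U * (2 * (N * V / q)))) := by
  have hqK : q * (N * V / q) ≤ N * V := Nat.mul_div_le (N * V) q
  have hmaps := fun x (hx : x ∈ offDiagonalSolutions q N U V) => offDiagonalKey_mem hUV hx
  generalize N * V / q = K at *
  have hcard : #(Icc 1 N ×ˢ Icc 1 U ×ˢ (Icc (-K : ℤ) K).erase 0) = N * (U * (2 * K)) := by
    rw [card_product, card_product, Nat.card_Icc, Nat.card_Icc, card_erase_of_mem (by simp),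
      Int.card_Icc]
    congr
    omega
  rw [← hcard]
  refine card_le_mul_card_image_of_maps_to hmaps D
    fun b hb => (card_fiber_offDiagonalKey_le b).trans (hD _ ?_)
  obtain ⟨m, u, k⟩ := b
  simp only [mem_product, mem_Icc, mem_erase] at hb
  obtain ⟨hm, hu, -, hk⟩ := hb
  have hmu : m * u ≤ N * V := Nat.mul_le_mul hm.2 (hu.2.trans hUV)
  have hqk : -((q : ℤ) * K) ≤ q * k := by nlinarith
  zify at hqK hmu
  dsimp only
  omega

end OffDiagonalSolutions

lemma T_le_card_offDiagonalSolutions (q N i j : ℕ) :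
    T q N i j ≤ #(offDiagonalSolutions q N ⌊exp ((i : ℝ) + 1)⌋₊ ⌊exp ((j : ℝ) + 1)⌋₊) := by
  refine (Nat.card_mono (offDiagonalSolutions _ _ _ _).finite_toSet ?_).trans_eq
    (Nat.card_eq_finsetCard _)
  rintro ⟨m, n, u, v⟩ ⟨hm, hm', hn, hn', hu, hu', hv, hv', hmod, hne⟩
  have hu1 : 1 ≤ u := by exact_mod_cast (one_le_exp (Nat.cast_nonneg i)).trans hu
  have hv1 : 1 ≤ v := by exact_mod_cast (one_le_exp (Nat.cast_nonneg j)).trans hv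
  exact mem_offDiagonalSolutions.mpr ⟨⟨hm, hm'⟩, ⟨hn, hn'⟩, ⟨hu1, Nat.le_floor hu'.le⟩,
    ⟨hv1, Nat.le_floor hv'.le⟩, hmod, hne⟩

lemma exp_le_sq_of_le_floor_two_mul_log {q : ℝ} (hq : 0 < q) {j : ℕ}
    (hj : (j : ℤ) ≤ ⌊2 * log q⌋) : exp j ≤ q ^ 2 := by
  calc exp j ≤ exp (2 * log q) := exp_le_exp.mpr (by exact_mod_cast Int.le_floor.mp hj)
    _ = q ^ 2 := by rw [← Nat.cast_ofNat, exp_nat_mul, exp_log hq]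

/-- For every `ε > 0` there is `C = C(ε) > 0` such that for all integers `q > N ≥ 1`
with `q ≥ 2` and all nonnegative integers `i ≤ j ≤ ⌊2 log q⌋`, one has
`T_{i,j}(q,N) ≤ C e^{i+j} N² q^{-1+ε}`. -/
theorem T_bound :
    ∀ ε : ℝ, 0 < ε → ∃ C : ℝ, 0 < C ∧ ∀ q N i j : ℕ, 2 ≤ q → 1 ≤ N → N < q →
      i ≤ j → (j : ℤ) ≤ ⌊2 * Real.log q⌋ →
      (T q N i j : ℝ) ≤ C * Real.exp ((i : ℝ) + (j : ℝ)) * (N : ℝ) ^ 2 *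
        (q : ℝ) ^ (-1 + ε) := by
  intro ε hε
  obtain ⟨C₀, hC₀, hdiv⟩ := Nat.card_divisors_le_mul_rpow (ε := ε / 6) (by positivity)
  refine ⟨2 * exp 2 * C₀, by positivity, fun q N i j hq _ hNq hij hj => ?_⟩
  have hq0 : (0 : ℝ) < q := by positivity
  set U := ⌊exp (i + 1)⌋₊
  set V := ⌊exp (j + 1)⌋₊
  have hUV : U ≤ V := Nat.floor_le_floor (exp_le_exp.mpr (by gcongr))
  have hNV : 2 * ((N : ℝ) * V) ≤ (q : ℝ) ^ 6 := by
    have hN : (N : ℝ) ≤ q := by exact_mod_cast hNq.le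
    have hV : (V : ℝ) ≤ exp 1 * q ^ 2 := by
      calc (V : ℝ) ≤ exp (j + 1) := Nat.floor_le (exp_pos _).le
        _ = exp 1 * exp j := by rw [add_comm, exp_add]
        _ ≤ exp 1 * q ^ 2 := by gcongr; exact exp_le_sq_of_le_floor_two_mul_log hq0 hj
    have he : exp 1 < 3 := lt_trans exp_one_lt_d9 (by norm_num)
    have hq2 : (2 : ℝ) ≤ q := by exact_mod_cast hq
    calc 2 * ((N : ℝ) * V) ≤ 2 * (q * (exp 1 * q ^ 2)) := by gcongr
      _ ≤ q ^ 6 := by nlinarith [pow_le_pow_left₀ (by norm_num) hq2 3]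
  have hD : ∀ M ≤ 2 * (N * V), #M.divisors ≤ ⌊C₀ * (q : ℝ) ^ ε⌋₊ := fun M hM => by
    refine Nat.le_floor ((hdiv M).trans ?_)
    have hM' : (M : ℝ) ≤ (q : ℝ) ^ 6 := le_trans (by exact_mod_cast hM) hNV
    calc C₀ * (M : ℝ) ^ (ε / 6) ≤ C₀ * ((q : ℝ) ^ 6) ^ (ε / 6) := by gcongr
      _ = C₀ * (q : ℝ) ^ ε := by
        rw [← rpow_natCast, ← rpow_mul hq0.le, Nat.cast_ofNat, mul_div_cancel₀ _ (by norm_num)]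
  have hcount := (T_le_card_offDiagonalSolutions q N i j).trans
    (card_offDiagonalSolutions_le hUV hD)
  calc (T q N i j : ℝ)
      ≤ ((⌊C₀ * (q : ℝ) ^ ε⌋₊ * (N * (U * (2 * (N * V / q)))) : ℕ) : ℝ) := Nat.cast_le.mpr hcount
    _ ≤ C₀ * (q : ℝ) ^ ε * (N * (exp (i + 1) * (2 * (N * exp (j + 1) / q)))) := by
        push_cast
        gcongr
        · exact Nat.floor_le (by positivity)
        · exact Nat.floor_le (by positivity)
        · refine (Nat.cast_div_le (α := ℝ)).trans ?_
          push_cast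
          gcongr
          exact Nat.floor_le (exp_pos _).le
    _ = 2 * exp 2 * C₀ * exp (i + j) * N ^ 2 * (q : ℝ) ^ (-1 + ε) := by
        rw [rpow_add hq0, rpow_neg_one, show (2 : ℝ) = 1 + 1 by norm_num, exp_add,
          exp_add, exp_add, exp_add]
        field_simp
end
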